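/- In Minkowski space ℝ^{n+2}_1 with o, ι, t_u, t_v as above, for λ ∈ ℝ with 2λ−1 > 0, the endomorphism ξ^Im = (t_u − λo − ι)∧t_v satisfies ξ^Im(W_±) = ±√(2λ−1)·W_±, where W_± = λo + ι − t_u ± √(2λ−1)·t_v. -/

import Mathlib

open Matrix Filter

/-- Sign of the Minkowski metric on `ℝ^{n+2}_1`: the last coordinate is timelike. -/
noncomputable def minkSign (n : ℕ) (i : Fin (n + 2)) : ℝ := if (i : ℕ) = n + 1 then -1 else 1

/-- The Minkowski inner product `⟨·,·⟩` on `ℝ^{n+2}_1` (signature (n+1,1)). -/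
noncomputable def mink (n : ℕ) (x y : Fin (n + 2) → ℝ) : ℝ := ∑ i, minkSign n i * x i * y i

/-- The wedge endomorphism `(v ∧ w)(x) = ⟨v,x⟩w − ⟨w,x⟩v`, realized as a matrix acting by `mulVec`. -/
noncomputable def wedgeM (n : ℕ) (v w : Fin (n + 2) → ℝ) : Matrix (Fin (n + 2)) (Fin (n + 2)) ℝ :=
  Matrix.of fun i j => minkSign n j * (v j * w i - w j * v i)

/-! With `v = t_u − λo − ι`, `w = t_v` and `s = √(2λ−1)` one has `⟨v,v⟩ = 1 − 2λ = −s²`,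
`⟨v,w⟩ = 0`, `⟨w,w⟩ = 1` and `W_± = −v ± s w`. Hence `(v∧w)(W_±) = ⟨v,W_±⟩ w − ⟨w,W_±⟩ v
= s² w ∓ s v = ±s W_±`; both signs are the single identity `(v∧w)(−v + c w) = c (−v + c w)`
for any `c` with `c² = −⟨v,v⟩`. -/

lemma mink_comm (n : ℕ) (x y : Fin (n + 2) → ℝ) : mink n x y = mink n y x :=
  Finset.sum_congr rfl fun _ _ => by ring

noncomputable def minkForm (n : ℕ) : LinearMap.BilinForm ℝ (Fin (n + 2) → ℝ) :=
  Matrix.toBilin' (diagonal (minkSign n))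

lemma minkForm_apply (n : ℕ) (x y : Fin (n + 2) → ℝ) : minkForm n x y = mink n x y := by
  simp only [minkForm, Matrix.toBilin'_apply', dotProduct, mulVec_diagonal, mink]
  exact Finset.sum_congr rfl fun _ _ => by ring

lemma wedgeM_mulVec (n : ℕ) (v w x : Fin (n + 2) → ℝ) :
    wedgeM n v w *ᵥ x = mink n v x • w - mink n w x • v := by
  funext i
  simp only [wedgeM, mulVec, dotProduct, of_apply, Pi.sub_apply, Pi.smul_apply, smul_eq_mul, mink,
    Finset.sum_mul, ← Finset.sum_sub_distrib]
  exact Finset.sum_congr rfl fun _ _ => by ring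

theorem wedgeM_mulVec_neg_add_smul {n : ℕ} {v w : Fin (n + 2) → ℝ} {c : ℝ}
    (hvv : mink n v v = -c ^ 2) (hvw : mink n v w = 0) (hww : mink n w w = 1) :
    wedgeM n v w *ᵥ (-v + c • w) = c • (-v + c • w) := by
  have hwv : mink n w v = 0 := mink_comm n w v ▸ hvw
  have hv : mink n v (-v + c • w) = c ^ 2 := by
    simp only [← minkForm_apply, map_add, map_neg, map_smul, smul_eq_mul]
    simp only [minkForm_apply, hvv, hvw]
    ring
  have hw : mink n w (-v + c • w) = c := by
    simp only [← minkForm_apply, map_add, map_neg, map_smul, smul_eq_mul]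
    simp only [minkForm_apply, hwv, hww]
    ring
  rw [wedgeM_mulVec, hv, hw]
  module

/-- with `o, ι` null, `⟨o,ι⟩ = −1`, and `t_u, t_v` orthonormal spacelike
vectors orthogonal to `o, ι`, for `2λ − 1 > 0` the endomorphism
`ξ^Im = (t_u − λo − ι)∧t_v` has eigenvectors
`W_± = λo + ι − t_u ± √(2λ−1)·t_v` with eigenvalues `±√(2λ−1)`. -/
theorem xiIm_eigenvectors (n : ℕ) (o ι tu tv : Fin (n + 2) → ℝ) (lam : ℝ)
    (ho : mink n o o = 0) (hι : mink n ι ι = 0) (hoι : mink n o ι = -1)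
    (htu : mink n tu tu = 1) (htv : mink n tv tv = 1) (htutv : mink n tu tv = 0)
    (hotu : mink n o tu = 0) (hotv : mink n o tv = 0)
    (hιtu : mink n ι tu = 0) (hιtv : mink n ι tv = 0)
    (hlam : 0 < 2 * lam - 1) :
    ∀ Wp Wm : Fin (n + 2) → ℝ,
      Wp = lam • o + ι - tu + Real.sqrt (2 * lam - 1) • tv →
      Wm = lam • o + ι - tu - Real.sqrt (2 * lam - 1) • tv →
      (wedgeM n (tu - lam • o - ι) tv).mulVec Wp = Real.sqrt (2 * lam - 1) • Wp ∧
      (wedgeM n (tu - lam • o - ι) tv).mulVec Wm = (-Real.sqrt (2 * lam - 1)) • Wm := by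
  rintro Wp Wm rfl rfl
  set v := tu - lam • o - ι
  set s := Real.sqrt (2 * lam - 1)
  have hvv : mink n v v = -s ^ 2 := by
    simp only [v, s, Real.sq_sqrt hlam.le, ← minkForm_apply, map_sub, map_smul,
      LinearMap.sub_apply, LinearMap.smul_apply, smul_eq_mul]
    simp only [minkForm_apply, mink_comm n ι o, mink_comm n tu o, mink_comm n tu ι,
      ho, hι, hoι, htu, hotu, hιtu]
    ring
  have hvtv : mink n v tv = 0 := by
    simp only [v, ← minkForm_apply, map_sub, map_smul, LinearMap.sub_apply, LinearMap.smul_apply,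
      smul_eq_mul]
    simp only [minkForm_apply, htutv, hotv, hιtv]
    ring
  have hWp : lam • o + ι - tu + s • tv = -v + s • tv := by module
  have hWm : lam • o + ι - tu - s • tv = -v + (-s) • tv := by module
  rw [hWp, hWm]
  exact ⟨wedgeM_mulVec_neg_add_smul hvv hvtv htv,
    wedgeM_mulVec_neg_add_smul (by rwa [neg_sq]) hvtv htv⟩
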